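/- arXiv:quant-ph/0504060 — 2 statements merged into one kernel-verified Lean document; each statement's English description precedes it below -/
import Mathlib

section
/- Let H be a bounded self-adjoint operator on a complex Hilbert space 𝓗 and let P be an orthogonal projection on 𝓗. Then for every real t, the operators (P ∘ exp(−(it/n)H))^n converge in operator norm, as n → ∞, to exp(−it·(P∘H∘P)) ∘ P. -/
open scoped InnerProductSpace Topology
open NormedSpace Filter
open scoped Nat

/-!
Write `X = exp (s H)` and `Y = exp (s B)` with `s = -i t / n` and `B = P H P`. As `P` commutes
with `B`, `(P Y)^n = exp (-i t B) P`. For idempotent `P` one has `(P X)^n = (P X P)^(n-1) (P X)`,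
so telescoping `(P X)^n - (P Y)^n` costs `n - 1` copies of `‖P (X - Y) P‖` and one `‖X - Y‖`,
all other factors being contractions (`P` is an orthogonal projection, `X` and `Y` are unitary).
Since `P (s H) P = P (s B) P`, the first-order terms cancel in `P (X - Y) P`, which is therefore
`O(1/n²)`, while `X - Y = O(1/n)`. Hence the error is `O(1/n)`.
-/

theorem IsIdempotentElem.mul_pow_succ {M : Type*} [Monoid M] {p : M} (hp : IsIdempotentElem p)
    (x : M) (n : ℕ) : (p * x) ^ (n + 1) = (p * x * p) ^ n * (p * x) := by
  induction n with
  | zero => simp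
  | succ n ih =>
    calc (p * x) ^ (n + 2) = (p * x * p) ^ n * ((p * x) * (p * x)) := by
          rw [pow_succ, ih, mul_assoc]
      _ = (p * x * p) ^ n * ((p * x * p) * (p * x)) := by
          rw [mul_assoc (p * x) p, ← mul_assoc p p x, hp.eq]
      _ = (p * x * p) ^ (n + 1) * (p * x) := by rw [pow_succ, mul_assoc ((p * x * p) ^ n)]

section NormedRing

variable {R : Type*} [NormedRing R]

theorem norm_pow_mul_le_of_norm_le_one {a : R} (ha : ‖a‖ ≤ 1) (c : R) (n : ℕ) :
    ‖a ^ n * c‖ ≤ ‖c‖ := by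
  induction n with
  | zero => rw [pow_zero, one_mul]
  | succ n ih =>
    calc ‖a ^ (n + 1) * c‖ = ‖a * (a ^ n * c)‖ := by rw [pow_succ', mul_assoc]
      _ ≤ 1 * ‖c‖ := norm_mul_le_of_le ha ih
      _ = ‖c‖ := one_mul _

theorem norm_pow_sub_pow_le_of_norm_le_one {a b : R} (ha : ‖a‖ ≤ 1) (hb : ‖b‖ ≤ 1) (n : ℕ) :
    ‖a ^ n - b ^ n‖ ≤ n * ‖a - b‖ := by
  induction n with
  | zero => simp
  | succ n ih =>
    calc ‖a ^ (n + 1) - b ^ (n + 1)‖ = ‖a ^ n * (a - b) + (a ^ n - b ^ n) * b‖ := by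
          rw [pow_succ, pow_succ, mul_sub, sub_mul]; abel_nf
      _ ≤ ‖a - b‖ + n * ‖a - b‖ * 1 :=
          norm_add_le_of_le (norm_pow_mul_le_of_norm_le_one ha _ n) (norm_mul_le_of_le ih hb)
      _ = (n + 1 : ℕ) * ‖a - b‖ := by push_cast; ring

theorem IsIdempotentElem.norm_mul_pow_sub_mul_pow_le {p x y : R} (hp : IsIdempotentElem p)
    (hp1 : ‖p‖ ≤ 1) (hx : ‖x‖ ≤ 1) (hy : ‖y‖ ≤ 1) (n : ℕ) :
    ‖(p * x) ^ n - (p * y) ^ n‖ ≤ n * ‖p * (x - y) * p‖ + ‖x - y‖ := by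
  have hpz : ∀ z : R, ‖z‖ ≤ 1 → ‖p * z‖ ≤ 1 := fun z hz => by
    simpa using norm_mul_le_of_le hp1 hz
  have hpzp : ∀ z : R, ‖z‖ ≤ 1 → ‖p * z * p‖ ≤ 1 := fun z hz => by
    simpa using norm_mul_le_of_le (hpz z hz) hp1
  cases n with
  | zero => simp
  | succ m =>
    have hdecomp : (p * x) ^ (m + 1) - (p * y) ^ (m + 1) =
        ((p * x * p) ^ m - (p * y * p) ^ m) * (p * x) + (p * y * p) ^ m * (p * (x - y)) := by
      rw [hp.mul_pow_succ, hp.mul_pow_succ, mul_sub p, mul_sub _ (p * x), sub_mul]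
      abel
    have hcompress : p * x * p - p * y * p = p * (x - y) * p := by rw [mul_sub, sub_mul]
    calc ‖(p * x) ^ (m + 1) - (p * y) ^ (m + 1)‖
        ≤ m * ‖p * (x - y) * p‖ * 1 + 1 * ‖x - y‖ := by
          rw [hdecomp, ← hcompress]
          exact norm_add_le_of_le
            (norm_mul_le_of_le (norm_pow_sub_pow_le_of_norm_le_one (hpzp x hx) (hpzp y hy) m)
              (hpz x hx))
            ((norm_pow_mul_le_of_norm_le_one (hpzp y hy) _ m).trans (norm_mul_le_of_le hp1 le_rfl))
      _ ≤ (m + 1 : ℕ) * ‖p * (x - y) * p‖ + ‖x - y‖ := by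
          push_cast; linarith [norm_nonneg (p * (x - y) * p)]

end NormedRing

section BanachAlgebra

variable {𝔸 : Type*} [NormedRing 𝔸] [NormedAlgebra ℚ 𝔸] [CompleteSpace 𝔸]

theorem norm_exp_sub_one_sub_le (x : 𝔸) : ‖exp x - 1 - x‖ ≤ ‖x‖ ^ 2 * Real.exp ‖x‖ := by
  have htail : HasSum (fun n => ((n + 2)! : ℚ)⁻¹ • x ^ (n + 2)) (exp x - 1 - x) := by
    simpa [Finset.sum_range_succ, sub_sub] using
      (hasSum_nat_add_iff' 2).mpr (exp_series_hasSum_exp' (𝕂 := ℚ) x)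
  have hmajorant : HasSum (fun n => ‖x‖ ^ 2 * (‖x‖ ^ n / n !)) (‖x‖ ^ 2 * Real.exp ‖x‖) := by
    rw [Real.exp_eq_exp_ℝ]
    exact (expSeries_div_hasSum_exp ‖x‖).mul_left _
  refine htail.norm_le_of_bounded hmajorant fun n => ?_
  calc ‖((n + 2)! : ℚ)⁻¹ • x ^ (n + 2)‖ ≤ ((n + 2)! : ℝ)⁻¹ * ‖x‖ ^ (n + 2) := by
        rw [norm_smul, norm_inv, ← Rat.norm_cast_real, Rat.cast_natCast, RCLike.norm_natCast]
        gcongr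
        exact norm_pow_le' x (by omega)
    _ ≤ (n ! : ℝ)⁻¹ * ‖x‖ ^ (n + 2) := by
        gcongr
        omega
    _ = ‖x‖ ^ 2 * (‖x‖ ^ n / n !) := by ring

theorem norm_exp_sub_exp_le (a b : 𝔸) :
    ‖exp a - exp b‖ ≤ ‖a‖ ^ 2 * Real.exp ‖a‖ + ‖b‖ ^ 2 * Real.exp ‖b‖ + ‖a - b‖ := by
  calc ‖exp a - exp b‖ = ‖(exp a - 1 - a) - (exp b - 1 - b) + (a - b)‖ := by abel_nf
    _ ≤ ‖exp a - 1 - a‖ + ‖exp b - 1 - b‖ + ‖a - b‖ :=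
        norm_add_le_of_le (norm_sub_le _ _) le_rfl
    _ ≤ _ := by gcongr <;> exact norm_exp_sub_one_sub_le _

theorem norm_mul_exp_sub_exp_mul_le {p a b : 𝔸} (hp : ‖p‖ ≤ 1) (hab : p * a * p = p * b * p) :
    ‖p * (exp a - exp b) * p‖ ≤ ‖a‖ ^ 2 * Real.exp ‖a‖ + ‖b‖ ^ 2 * Real.exp ‖b‖ := by
  have hcancel : p * (exp a - exp b) * p = p * ((exp a - 1 - a) - (exp b - 1 - b)) * p := by
    have hdiff : p * (a - b) * p = 0 := by rw [mul_sub, sub_mul, hab, sub_self]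
    calc p * (exp a - exp b) * p = p * ((exp a - 1 - a) - (exp b - 1 - b) + (a - b)) * p := by
          congr 2; abel
      _ = _ := by rw [mul_add, add_mul, hdiff, add_zero]
  calc ‖p * (exp a - exp b) * p‖ ≤ 1 * ‖(exp a - 1 - a) - (exp b - 1 - b)‖ * 1 := by
        rw [hcancel]; exact norm_mul_le_of_le (norm_mul_le_of_le hp le_rfl) hp
    _ ≤ ‖exp a - 1 - a‖ + ‖exp b - 1 - b‖ := by rw [one_mul, mul_one]; exact norm_sub_le _ _
    _ ≤ _ := by gcongr <;> exact norm_exp_sub_one_sub_le _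

theorem IsIdempotentElem.mul_exp_pow {p a : 𝔸} (hp : IsIdempotentElem p) (hpa : Commute p a)
    {n : ℕ} (hn : n ≠ 0) : (p * exp a) ^ n = exp (n • a) * p := by
  obtain ⟨m, rfl⟩ := Nat.exists_eq_succ_of_ne_zero hn
  rw [hpa.exp_right.mul_pow, hp.pow_succ_eq, exp_nsmul, (hpa.exp_right.pow_right _).eq]

theorem IsIdempotentElem.norm_mul_exp_pow_sub_mul_exp_pow_le {p a b : 𝔸}
    (hp : IsIdempotentElem p) (hp1 : ‖p‖ ≤ 1) (ha : ‖exp a‖ ≤ 1) (hb : ‖exp b‖ ≤ 1)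
    (hab : p * a * p = p * b * p) (n : ℕ) :
    ‖(p * exp a) ^ n - (p * exp b) ^ n‖ ≤
      (n + 1) * (‖a‖ ^ 2 * Real.exp ‖a‖ + ‖b‖ ^ 2 * Real.exp ‖b‖) + ‖a - b‖ := by
  calc ‖(p * exp a) ^ n - (p * exp b) ^ n‖
      ≤ n * ‖p * (exp a - exp b) * p‖ + ‖exp a - exp b‖ :=
        hp.norm_mul_pow_sub_mul_pow_le hp1 ha hb n
    _ ≤ n * (‖a‖ ^ 2 * Real.exp ‖a‖ + ‖b‖ ^ 2 * Real.exp ‖b‖) +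
          (‖a‖ ^ 2 * Real.exp ‖a‖ + ‖b‖ ^ 2 * Real.exp ‖b‖ + ‖a - b‖) := by
        gcongr
        exacts [norm_mul_exp_sub_exp_mul_le hp1 hab, norm_exp_sub_exp_le a b]
    _ = _ := by ring

end BanachAlgebra

section CStarRing

variable {A : Type*} [NormedRing A] [StarRing A] [CStarRing A] [NormedAlgebra ℚ A]
  [CompleteSpace A]

theorem norm_exp_le_one_of_mem_skewAdjoint {x : A} (hx : x ∈ skewAdjoint A) : ‖exp x‖ ≤ 1 := by
  rcases subsingleton_or_nontrivial A with hA | hA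
  · simp [Subsingleton.elim (exp x) 0]
  · exact (CStarRing.norm_of_mem_unitary (exp_mem_unitary_of_mem_skewAdjoint hx)).le

end CStarRing

section CStarAlgebra

variable {A : Type*} [CStarAlgebra A] [NormedAlgebra ℚ A] {p h : A}

theorem IsStarProjection.norm_mul_exp_smul_pow_sub_le (hp : IsStarProjection p)
    (hh : IsSelfAdjoint h) {s : ℂ} (hs : s ∈ skewAdjoint ℂ) (n : ℕ) :
    ‖(p * exp (s • h)) ^ n - (p * exp (s • (p * h * p))) ^ n‖ ≤
      (n + 1) * (‖s • h‖ ^ 2 * Real.exp ‖s • h‖ +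
          ‖s • (p * h * p)‖ ^ 2 * Real.exp ‖s • (p * h * p)‖) + ‖s‖ * ‖h - p * h * p‖ := by
  have hcompress : p * (s • h) * p = p * (s • (p * h * p)) * p := by
    simp only [mul_smul_comm, smul_mul_assoc, mul_assoc, hp.isIdempotentElem.eq,
      hp.isIdempotentElem.mul_self_mul]
  rw [← norm_smul, smul_sub]
  exact hp.isIdempotentElem.norm_mul_exp_pow_sub_mul_exp_pow_le (hp.norm_le p)
    (norm_exp_le_one_of_mem_skewAdjoint (hh.smul_mem_skewAdjoint hs))
    (norm_exp_le_one_of_mem_skewAdjoint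
      ((hh.conjugate_self hp.isSelfAdjoint).smul_mem_skewAdjoint hs)) hcompress n

theorem IsStarProjection.norm_mul_exp_pow_sub_exp_mul_le (hp : IsStarProjection p)
    (hh : IsSelfAdjoint h) (t : ℝ) {n : ℕ} (hn : n ≠ 0) :
    ‖(p * exp ((-(Complex.I * (t / n))) • h)) ^ n - exp ((-(Complex.I * t)) • (p * h * p)) * p‖ ≤
      (2 * t ^ 2 * (‖h‖ ^ 2 * Real.exp (|t| * ‖h‖) +
          ‖p * h * p‖ ^ 2 * Real.exp (|t| * ‖p * h * p‖)) + |t| * ‖h - p * h * p‖) / n := by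
  set s : ℂ := -(Complex.I * (t / n)) with hs_def
  set b := p * h * p
  have hn_pos : (0 : ℝ) < n := by positivity
  have hs : ‖s‖ = |t| / n := by simp [s]
  have hs_skew : s ∈ skewAdjoint ℂ := by rw [skewAdjoint.mem_iff]; simp [s]
  have hpb : Commute p b := by
    simp only [Commute, SemiconjBy, b, mul_assoc, hp.isIdempotentElem.eq,
      hp.isIdempotentElem.mul_self_mul]
  have hpow : (p * exp (s • b)) ^ n = exp ((-(Complex.I * t)) • b) * p := by
    rw [hp.isIdempotentElem.mul_exp_pow (hpb.smul_right s) hn, ← Nat.cast_smul_eq_nsmul ℂ,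
      smul_smul]
    have hn' : (n : ℂ) ≠ 0 := by exact_mod_cast hn
    congr 3
    rw [hs_def]
    field_simp
  have hρ : ∀ x : A, ‖s • x‖ ^ 2 * Real.exp ‖s • x‖ ≤
      (|t| / n) ^ 2 * (‖x‖ ^ 2 * Real.exp (|t| * ‖x‖)) := by
    intro x
    rw [norm_smul, hs, mul_pow, mul_assoc]
    gcongr
    exact div_le_self (abs_nonneg t) (by exact_mod_cast Nat.one_le_iff_ne_zero.mpr hn)
  have hrate : ∀ K D : ℝ, 0 ≤ K →
      (n + 1) * ((|t| / n) ^ 2 * K) + |t| / n * D ≤ (2 * t ^ 2 * K + |t| * D) / n := by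
    intro K D hK
    have hn1 : (1 : ℝ) ≤ n := by exact_mod_cast Nat.one_le_iff_ne_zero.mpr hn
    rw [div_pow, sq_abs, le_div_iff₀ hn_pos]
    field_simp
    nlinarith [mul_nonneg (mul_nonneg (sub_nonneg.2 hn1) (sq_nonneg t)) hK]
  rw [← hpow]
  calc ‖(p * exp (s • h)) ^ n - (p * exp (s • b)) ^ n‖
      ≤ (n + 1) * (‖s • h‖ ^ 2 * Real.exp ‖s • h‖ + ‖s • b‖ ^ 2 * Real.exp ‖s • b‖) +
          ‖s‖ * ‖h - b‖ := hp.norm_mul_exp_smul_pow_sub_le hh hs_skew n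
    _ ≤ (n + 1) * ((|t| / n) ^ 2 * (‖h‖ ^ 2 * Real.exp (|t| * ‖h‖) +
          ‖b‖ ^ 2 * Real.exp (|t| * ‖b‖))) + |t| / n * ‖h - b‖ := by
        rw [hs, mul_add ((|t| / n) ^ 2)]
        gcongr _ * (?_ + ?_) + _ <;> exact hρ _
    _ ≤ _ := hrate _ _ (by positivity)

end CStarAlgebra

/-- **Non-symmetric Zeno product formula** (first version): for a bounded self-adjoint
operator `H` and an orthogonal projection `P`, `(P e^{-itH/n})^n → e^{-it P H P} P`
in operator norm as `n → ∞`. -/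
theorem zeno_product_formula_nonsymmetric_left
    {𝓗 : Type*} [NormedAddCommGroup 𝓗] [InnerProductSpace ℂ 𝓗] [CompleteSpace 𝓗]
    (H P : 𝓗 →L[ℂ] 𝓗)
    (hH : ∀ x y : 𝓗, ⟪H x, y⟫_ℂ = ⟪x, H y⟫_ℂ)
    (hPproj : P ∘L P = P)
    (hPsa : ∀ x y : 𝓗, ⟪P x, y⟫_ℂ = ⟪x, P y⟫_ℂ)
    (t : ℝ) :
    Filter.Tendsto
      (fun n : ℕ => (P ∘L NormedSpace.exp ((-(Complex.I * (t / n))) • H)) ^ n)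
      Filter.atTop
      (𝓝 (NormedSpace.exp ((-(Complex.I * t)) • (P ∘L H ∘L P)) ∘L P)) := by
  let : NormedAlgebra ℚ (𝓗 →L[ℂ] 𝓗) := NormedAlgebra.restrictScalars ℚ ℂ _
  have hHsa : IsSelfAdjoint H := ContinuousLinearMap.isSelfAdjoint_iff_isSymmetric.mpr hH
  have hP : IsStarProjection P :=
    ⟨hPproj, ContinuousLinearMap.isSelfAdjoint_iff_isSymmetric.mpr hPsa⟩
  rw [tendsto_iff_norm_sub_tendsto_zero]
  exact squeeze_zero' (.of_forall fun n => norm_nonneg _)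
    ((eventually_ne_atTop 0).mono fun n hn => hP.norm_mul_exp_pow_sub_exp_mul_le hHsa t hn)
    (tendsto_const_div_atTop_nhds_zero_nat _)
end

section
/- Let H be a bounded self-adjoint operator on a complex Hilbert space 𝓗 and let P be an orthogonal projection on 𝓗. Then for every real t, the operators (exp(−(it/n)H) ∘ P)^n converge in operator norm, as n → ∞, to exp(−it·(P∘H∘P)) ∘ P. -/
open scoped InnerProductSpace Topology

/-!
Let `x = -i t H`, `E = exp (x / n)` and `C = exp (P x P / n)`. Since `P x P` commutes with `P`, the
limit is `C ^ n P`, while `(E P) ^ n = E (P E P) ^ (n - 1) P` and `C ^ n P = C (P C P) ^ (n - 1) P`.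
The compressions `P E P` and `P C P` agree to first order in `1 / n`, because `x` and `P x P` have
the same compression; so they differ by `O(1 / n²)`, and by telescoping their `(n - 1)`-st powers
differ by `O(1 / n)`. The first-order difference `E - C` enters only once.
-/
open Filter Finset

namespace NormedSpace

variable (𝕂 : Type*) {𝔸 : Type*} [RCLike 𝕂] [NormedRing 𝔸] [NormedAlgebra 𝕂 𝔸]
  [NormOneClass 𝔸] [CompleteSpace 𝔸]

theorem norm_exp_sub_sum_le (x : 𝔸) (k : ℕ) :
    ‖exp x - ∑ i ∈ range k, (i.factorial⁻¹ : 𝕂) • x ^ i‖ ≤ ‖x‖ ^ k * Real.exp ‖x‖ := by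
  set f : ℕ → 𝔸 := fun i => (i.factorial⁻¹ : 𝕂) • x ^ i
  have hf : Summable fun i => ‖f i‖ := norm_expSeries_summable' x
  have hf_tail : Summable fun i => ‖f (i + k)‖ := (summable_nat_add_iff k).2 hf
  have htail : exp x - ∑ i ∈ range k, f i = ∑' i, f (i + k) := by
    rw [congrFun (exp_eq_tsum 𝕂) x, ← hf.of_norm.sum_add_tsum_nat_add k, add_sub_cancel_left]
  have hterm (i : ℕ) : ‖f (i + k)‖ ≤ ‖x‖ ^ k * (‖x‖ ^ i / i.factorial) := calc
    ‖f (i + k)‖ = ‖x ^ (i + k)‖ / (i + k).factorial := by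
      simp [f, norm_smul, div_eq_inv_mul]
    _ ≤ ‖x‖ ^ (i + k) / i.factorial := by
      gcongr
      · exact norm_pow_le x _
      · exact Nat.le_add_right i k
    _ = ‖x‖ ^ k * (‖x‖ ^ i / i.factorial) := by ring
  calc ‖exp x - ∑ i ∈ range k, f i‖ ≤ ∑' i, ‖f (i + k)‖ := htail ▸ norm_tsum_le_tsum_norm hf_tail
    _ ≤ ∑' i : ℕ, ‖x‖ ^ k * (‖x‖ ^ i / i.factorial) :=
      hf_tail.tsum_le_tsum hterm ((Real.summable_pow_div_factorial _).mul_left _)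
    _ = ‖x‖ ^ k * Real.exp ‖x‖ := by rw [tsum_mul_left, Real.exp_eq_exp_ℝ, exp_eq_tsum_div]

include 𝕂 in
theorem norm_exp_le_exp_norm (x : 𝔸) : ‖exp x‖ ≤ Real.exp ‖x‖ := by
  simpa using norm_exp_sub_sum_le 𝕂 x 0

include 𝕂 in
theorem norm_exp_sub_one_le (x : 𝔸) : ‖exp x - 1‖ ≤ ‖x‖ * Real.exp ‖x‖ := by
  simpa using norm_exp_sub_sum_le 𝕂 x 1

include 𝕂 in
theorem norm_exp_sub_one_sub_self_le (x : 𝔸) : ‖exp x - 1 - x‖ ≤ ‖x‖ ^ 2 * Real.exp ‖x‖ := by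
  simpa [sum_range_succ, sub_sub] using norm_exp_sub_sum_le 𝕂 x 2

end NormedSpace

section NormedRing

variable {R : Type*} [NormedRing R]

theorem norm_pow_sub_pow_le [NormOneClass R] {a b : R} {M : ℝ} (ha : ‖a‖ ≤ M) (hb : ‖b‖ ≤ M)
    (n : ℕ) : ‖a ^ n - b ^ n‖ ≤ n * M ^ (n - 1) * ‖a - b‖ := by
  induction n with
  | zero => simp
  | succ n ih =>
    have hbn : ‖b ^ n‖ ≤ M ^ n :=
      (norm_pow_le b n).trans (pow_le_pow_left₀ (norm_nonneg b) hb n)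
    calc ‖a ^ (n + 1) - b ^ (n + 1)‖ = ‖a * (a ^ n - b ^ n) + (a - b) * b ^ n‖ := by
          rw [pow_succ', pow_succ']; noncomm_ring
      _ ≤ M * (n * M ^ (n - 1) * ‖a - b‖) + ‖a - b‖ * M ^ n :=
        norm_add_le_of_le (norm_mul_le_of_le ha ih) (norm_mul_le_of_le le_rfl hbn)
      _ = (n + 1 : ℕ) * M ^ n * ‖a - b‖ := by
        cases n with
        | zero => simp
        | succ n => push_cast; ring

theorem norm_mul_mul_le_of_norm_le_one {P : R} (hP : ‖P‖ ≤ 1) (x : R) : ‖P * x * P‖ ≤ ‖x‖ :=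
  calc ‖P * x * P‖ ≤ ‖P‖ * ‖x‖ * ‖P‖ := norm_mul₃_le
    _ ≤ 1 * ‖x‖ * 1 := by gcongr
    _ = ‖x‖ := by ring

namespace IsIdempotentElem

variable {P : R} (hP : IsIdempotentElem P)
include hP

theorem commute_mul_mul (x : R) : Commute P (P * x * P) := by
  simp only [Commute, SemiconjBy, ← mul_assoc, hP.eq]
  simp only [mul_assoc, hP.eq]

theorem mul_pow_succ_s2 (a : R) (n : ℕ) : (a * P) ^ (n + 1) = a * (P * a * P) ^ n * P := by
  induction n with
  | zero => simp
  | succ n ih =>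
    rw [pow_succ, ih, pow_succ]
    simp only [mul_assoc, hP.eq]

theorem norm_mul_pow_succ_sub_mul_pow_succ_le [NormOneClass R] (hP1 : ‖P‖ ≤ 1) {a b : R} {M : ℝ}
    (ha : ‖a‖ ≤ M) (hb : ‖b‖ ≤ M) (n : ℕ) :
    ‖(a * P) ^ (n + 1) - (b * P) ^ (n + 1)‖ ≤ M ^ n * (n * ‖P * (a - b) * P‖ + ‖a - b‖) := by
  have hM : 0 ≤ M := (norm_nonneg a).trans ha
  have hA : ‖P * a * P‖ ≤ M := (norm_mul_mul_le_of_norm_le_one hP1 a).trans ha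
  have hB : ‖P * b * P‖ ≤ M := (norm_mul_mul_le_of_norm_le_one hP1 b).trans hb
  have hBn : ‖(P * b * P) ^ n‖ ≤ M ^ n :=
    (norm_pow_le _ n).trans (pow_le_pow_left₀ (norm_nonneg _) hB n)
  have hdiff := norm_pow_sub_pow_le hA hB n
  rw [show P * a * P - P * b * P = P * (a - b) * P by noncomm_ring] at hdiff
  calc ‖(a * P) ^ (n + 1) - (b * P) ^ (n + 1)‖
      = ‖a * ((P * a * P) ^ n - (P * b * P) ^ n) * P + (a - b) * (P * b * P) ^ n * P‖ := by
        rw [hP.mul_pow_succ_s2, hP.mul_pow_succ_s2]; noncomm_ring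
    _ ≤ M * (n * M ^ (n - 1) * ‖P * (a - b) * P‖) * 1 + ‖a - b‖ * M ^ n * 1 :=
      norm_add_le_of_le (norm_mul₃_le.trans (by gcongr))
        (norm_mul₃_le.trans (by gcongr))
    _ = M ^ n * (n * ‖P * (a - b) * P‖ + ‖a - b‖) := by
      cases n with
      | zero => simp
      | succ n => push_cast; ring

end IsIdempotentElem

end NormedRing

namespace IsIdempotentElem

open NormedSpace

variable (𝕂 : Type*) {𝔸 : Type*} [RCLike 𝕂] [NormedRing 𝔸] [NormedAlgebra 𝕂 𝔸]
  [NormOneClass 𝔸] [CompleteSpace 𝔸] {P : 𝔸}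

include 𝕂 in
theorem norm_exp_mul_pow_succ_sub_le (hP : IsIdempotentElem P) (hP1 : ‖P‖ ≤ 1) (x : 𝔸) (n : ℕ) :
    ‖(exp x * P) ^ (n + 1) - exp (P * x * P) ^ (n + 1) * P‖
      ≤ 2 * Real.exp ((n + 1) * ‖x‖) * (n * ‖x‖ ^ 2 + ‖x‖) := by
  set y := P * x * P
  set M := Real.exp ‖x‖
  have hy : ‖y‖ ≤ ‖x‖ := norm_mul_mul_le_of_norm_le_one hP1 x
  have hPyP : P * y * P = P * x * P := by
    simp only [y, ← mul_assoc, hP.eq]; simp only [mul_assoc, hP.eq]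
  have hMy : Real.exp ‖y‖ ≤ M := Real.exp_le_exp.2 hy
  have hE : ‖exp x‖ ≤ M := norm_exp_le_exp_norm 𝕂 x
  have hC : ‖exp y‖ ≤ M := (norm_exp_le_exp_norm 𝕂 y).trans hMy
  -- `x` and `y` have the same compression, so only the quadratic remainders survive.
  have hsecond : ‖P * (exp x - exp y) * P‖ ≤ 2 * ‖x‖ ^ 2 * M := calc
    ‖P * (exp x - exp y) * P‖ = ‖P * (exp x - 1 - x) * P - P * (exp y - 1 - y) * P‖ := by
      rw [show P * (exp x - 1 - x) * P - P * (exp y - 1 - y) * P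
          = P * (exp x - exp y) * P + (P * y * P - P * x * P) by noncomm_ring, hPyP, sub_self,
        add_zero]
    _ ≤ ‖exp x - 1 - x‖ + ‖exp y - 1 - y‖ :=
      norm_sub_le_of_le (norm_mul_mul_le_of_norm_le_one hP1 _)
        (norm_mul_mul_le_of_norm_le_one hP1 _)
    _ ≤ ‖x‖ ^ 2 * M + ‖x‖ ^ 2 * M := by
      gcongr
      · exact norm_exp_sub_one_sub_self_le 𝕂 x
      · exact (norm_exp_sub_one_sub_self_le 𝕂 y).trans (by gcongr)
    _ = 2 * ‖x‖ ^ 2 * M := by ring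
  have hfirst : ‖exp x - exp y‖ ≤ 2 * ‖x‖ * M := calc
    ‖exp x - exp y‖ = ‖(exp x - 1) - (exp y - 1)‖ := by rw [sub_sub_sub_cancel_right]
    _ ≤ ‖x‖ * M + ‖x‖ * M := by
      refine norm_sub_le_of_le (norm_exp_sub_one_le 𝕂 x) ?_
      exact (norm_exp_sub_one_le 𝕂 y).trans (by gcongr)
    _ = 2 * ‖x‖ * M := by ring
  have hCP : exp y ^ (n + 1) * P = (exp y * P) ^ (n + 1) := by
    rw [((hP.commute_mul_mul x).exp_right).symm.mul_pow, hP.pow_succ_eq]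
  calc ‖(exp x * P) ^ (n + 1) - exp y ^ (n + 1) * P‖
      ≤ M ^ n * (n * ‖P * (exp x - exp y) * P‖ + ‖exp x - exp y‖) := by
        rw [hCP]; exact hP.norm_mul_pow_succ_sub_mul_pow_succ_le hP1 hE hC n
    _ ≤ M ^ n * (n * (2 * ‖x‖ ^ 2 * M) + 2 * ‖x‖ * M) := by gcongr
    _ = 2 * M ^ (n + 1) * (n * ‖x‖ ^ 2 + ‖x‖) := by ring
    _ = 2 * Real.exp ((n + 1) * ‖x‖) * (n * ‖x‖ ^ 2 + ‖x‖) := by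
      rw [← Real.exp_nat_mul]; push_cast; rfl

variable {𝕂} in
theorem tendsto_exp_div_smul_mul_pow (hP : IsIdempotentElem P) (hP1 : ‖P‖ ≤ 1) (H : 𝔸) (z : 𝕂) :
    Tendsto (fun n : ℕ => (exp ((z / n) • H) * P) ^ n) atTop (𝓝 (exp (z • (P * H * P)) * P)) := by
  set R := ‖z‖ * ‖H‖
  rw [← tendsto_add_atTop_iff_nat 1, tendsto_iff_norm_sub_tendsto_zero]
  have hlim := (tendsto_one_div_add_atTop_nhds_zero_nat (𝕜 := ℝ)).const_mul
    (2 * Real.exp R * (R ^ 2 + R))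
  rw [mul_zero] at hlim
  refine squeeze_zero (fun _ => norm_nonneg _) (fun n => ?_) hlim
  set x := (z / (n + 1 : ℕ)) • H
  have hx : ‖x‖ = R / (n + 1) := by
    rw [norm_smul, norm_div, RCLike.norm_natCast]; push_cast; ring
  have hpow : exp (P * x * P) ^ (n + 1) = exp (z • (P * H * P)) := by
    let _ : NormedAlgebra ℚ 𝔸 := NormedAlgebra.restrictScalars ℚ 𝕂 𝔸
    rw [← exp_nsmul, mul_smul_comm, smul_mul_assoc, ← Nat.cast_smul_eq_nsmul 𝕂, smul_smul,
      mul_div_cancel₀ _ (Nat.cast_ne_zero.2 n.succ_ne_zero)]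
  calc ‖(exp x * P) ^ (n + 1) - exp (z • (P * H * P)) * P‖
      ≤ 2 * Real.exp ((n + 1) * ‖x‖) * (n * ‖x‖ ^ 2 + ‖x‖) :=
        hpow ▸ hP.norm_exp_mul_pow_succ_sub_le 𝕂 hP1 x n
    _ ≤ 2 * Real.exp R * (R ^ 2 + R) * (1 / ((n : ℝ) + 1)) := by
      have hn : (0 : ℝ) < n + 1 := n.cast_add_one_pos
      have hgap : n * (R / (n + 1)) ^ 2 + R / (n + 1) + (R / (n + 1)) ^ 2
          = (R ^ 2 + R) * (1 / (n + 1)) := by field_simp; ring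
      rw [hx, mul_div_cancel₀ _ hn.ne', mul_assoc _ (R ^ 2 + R), ← hgap]
      exact mul_le_mul_of_nonneg_left (le_add_of_nonneg_right (sq_nonneg _)) (by positivity)

end IsIdempotentElem

theorem zeno_product_formula_nonsymmetric_right_general
    {𝓗 : Type*} [NormedAddCommGroup 𝓗] [InnerProductSpace ℂ 𝓗] [CompleteSpace 𝓗]
    (H P : 𝓗 →L[ℂ] 𝓗)
    (hPproj : P ∘L P = P)
    (hPsa : ∀ x y : 𝓗, ⟪P x, y⟫_ℂ = ⟪x, P y⟫_ℂ)
    (t : ℝ) :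
    Filter.Tendsto
      (fun n : ℕ => (NormedSpace.exp ((-(Complex.I * (t / n))) • H) ∘L P) ^ n)
      Filter.atTop
      (𝓝 (NormedSpace.exp ((-(Complex.I * t)) • (P ∘L H ∘L P)) ∘L P)) := by
  -- The operator algebra is a `NormOneClass` only when `𝓗` is nontrivial.
  rcases subsingleton_or_nontrivial 𝓗 with h𝓗 | h𝓗
  · exact tendsto_const_nhds.congr fun _ => Subsingleton.elim _ _
  have hP : IsIdempotentElem P := hPproj
  have hP1 : ‖P‖ ≤ 1 :=
    IsStarProjection.norm_le P ⟨hP, ContinuousLinearMap.isSelfAdjoint_iff_isSymmetric.2 hPsa⟩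
  have hscalar (n : ℕ) : -(Complex.I * (t / n)) = -(Complex.I * t) / n := by ring
  simp only [hscalar]
  exact hP.tendsto_exp_div_smul_mul_pow hP1 H (-(Complex.I * t))

/-- **Non-symmetric Zeno product formula** (first version): for a bounded self-adjoint
operator `H` and an orthogonal projection `P`, `(e^{-itH/n} P)^n → e^{-it P H P} P`
in operator norm as `n → ∞`. -/
theorem zeno_product_formula_nonsymmetric_right
    {𝓗 : Type*} [NormedAddCommGroup 𝓗] [InnerProductSpace ℂ 𝓗] [CompleteSpace 𝓗]
    (H P : 𝓗 →L[ℂ] 𝓗)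
    (hH : ∀ x y : 𝓗, ⟪H x, y⟫_ℂ = ⟪x, H y⟫_ℂ)
    (hPproj : P ∘L P = P)
    (hPsa : ∀ x y : 𝓗, ⟪P x, y⟫_ℂ = ⟪x, P y⟫_ℂ)
    (t : ℝ) :
    Filter.Tendsto
      (fun n : ℕ => (NormedSpace.exp ((-(Complex.I * (t / n))) • H) ∘L P) ^ n)
      Filter.atTop
      (𝓝 (NormedSpace.exp ((-(Complex.I * t)) • (P ∘L H ∘L P)) ∘L P)) :=
  zeno_product_formula_nonsymmetric_right_general H P hPproj hPsa t
end
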